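/- Let n ≥ 4, s ∈ (0,1), p ∈ [1, 2*−1), λ > 0, and let h : ℝⁿ → ℝ be a positive bounded continuous function. Let u ∈ C²(ℝⁿ) ∩ L^∞(ℝⁿ) be a nonnegative classical solution of −Δu(x) + (−Δ)^s u(x) = λ h(x) u(x)^p + u(x)^{2*−1} for all x ∈ ℝⁿ, with u not identically zero. Then u(x) > 0 for every x ∈ ℝⁿ. -/

import Mathlib

/-!
At a zero `x` of `u` the right-hand side vanishes and `x` is a global minimum of `u`. Hence every
second derivative `∂ᵢ²u(x)` is nonnegative, so `-Δu(x) ≤ 0`, while the integrand of `(-Δ)ˢu(x)` is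
`-(u(x+z) + u(x-z)) / |z|^{n+2s} ≤ 0`, and strictly negative on the open set where `u(x+z) > 0`,
which is nonempty because `u ≢ 0`. So the left-hand side is negative at `x`, a contradiction.

The Bochner integral of a non-integrable function is `0`, so the integrand has to be shown
integrable: it is `O(|z|^{2-n-2s})` near `0` by Taylor's formula, and `O(|z|^{-n-2s})` at infinity
because `u` is bounded.
-/

open MeasureTheory Metric Set
open scoped RealInnerProductSpace
noncomputable section

/-- The Laplacian `Δu(x) = ∑ᵢ ∂²u/∂xᵢ²(x)`. -/
def lap (n : ℕ) (u : EuclideanSpace ℝ (Fin n) → ℝ) (x : EuclideanSpace ℝ (Fin n)) : ℝ :=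
  ∑ i : Fin n,
    iteratedFDeriv ℝ 2 u x ![EuclideanSpace.single i 1, EuclideanSpace.single i 1]

/-- The standard normalization constant `c_{n,s}` of the fractional Laplacian. -/
def fracLapConst (n : ℕ) (s : ℝ) : ℝ :=
  (2 : ℝ) ^ (2 * s) * s * Real.Gamma ((n : ℝ) / 2 + s)
    / (Real.pi ^ ((n : ℝ) / 2) * Real.Gamma (1 - s))

/-- The fractional Laplacian
`(-Δ)^s u(x) = (c_{n,s}/2) ∫ (2u(x) - u(x+z) - u(x-z))/|z|^{n+2s} dz`. -/
def fracLap (n : ℕ) (s : ℝ) (u : EuclideanSpace ℝ (Fin n) → ℝ)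
    (x : EuclideanSpace ℝ (Fin n)) : ℝ :=
  (fracLapConst n s / 2) *
    ∫ z : EuclideanSpace ℝ (Fin n),
      (2 * u x - u (x + z) - u (x - z)) / ‖z‖ ^ ((n : ℝ) + 2 * s)

/-- The critical Sobolev exponent `2* = 2n/(n-2)`. -/
def critExp (n : ℕ) : ℝ := 2 * (n : ℝ) / ((n : ℝ) - 2)

section Calculus

open Topology

variable {E F : Type*} [NormedAddCommGroup E] [NormedSpace ℝ E]
  [NormedAddCommGroup F] [NormedSpace ℝ F]

theorem IsLocalMin.deriv_deriv_nonneg {f : ℝ → ℝ} {a : ℝ} (hmin : IsLocalMin f a)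
    (hf : ContinuousAt f a) : 0 ≤ deriv (deriv f) a := by
  -- a negative second derivative would make `a` also a local maximum, so `f` locally constant
  by_contra! hneg
  have hmax : IsLocalMax f a := isLocalMax_of_deriv_deriv_neg hneg hmin.deriv_eq_zero hf
  have hconst : f =ᶠ[𝓝 a] fun _ => f a :=
    (hmin.and hmax).mono fun _ hx => le_antisymm hx.2 hx.1
  have hderiv : deriv f =ᶠ[𝓝 a] fun _ => 0 := hconst.deriv.trans (by simp)
  exact hneg.ne (by rw [hderiv.deriv_eq]; simp)

theorem hasDerivAt_comp_add_smul {f : E → F} {f' : E →L[ℝ] F} {x v : E} {t : ℝ}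
    (hf : HasFDerivAt f f' (x + t • v)) : HasDerivAt (fun t : ℝ => f (x + t • v)) (f' v) t := by
  have hline : HasDerivAt (fun t : ℝ => x + t • v) v t := by
    simpa using ((hasDerivAt_id t).smul_const v).const_add x
  exact hf.comp_hasDerivAt t hline

theorem ContDiff.deriv_deriv_comp_add_smul {u : E → F} (hu : ContDiff ℝ 2 u) (x v : E) :
    deriv (deriv fun t : ℝ => u (x + t • v)) 0 = fderiv ℝ (fderiv ℝ u) x v v := by
  have hDu : Differentiable ℝ (fderiv ℝ u) :=
    (hu.fderiv_right (m := 1) le_rfl).differentiable one_ne_zero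
  have hderiv : deriv (fun t : ℝ => u (x + t • v)) = fun t => fderiv ℝ u (x + t • v) v := by
    funext t
    exact (hasDerivAt_comp_add_smul (hu.differentiable two_ne_zero _).hasFDerivAt).deriv
  rw [hderiv]
  simpa using ((hasDerivAt_comp_add_smul (hDu (x + (0 : ℝ) • v)).hasFDerivAt).clm_apply
    (hasDerivAt_const 0 v)).deriv

theorem IsLocalMin.iteratedFDeriv_two_nonneg {u : E → ℝ} {x : E} (hu : ContDiff ℝ 2 u)
    (hmin : IsLocalMin u x) (v : E) : 0 ≤ iteratedFDeriv ℝ 2 u x ![v, v] := by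
  have hline : Continuous fun t : ℝ => x + t • v := by fun_prop
  have hmin_line : IsLocalMin (fun t : ℝ => u (x + t • v)) 0 :=
    IsLocalMin.comp_continuous (g := fun t : ℝ => x + t • v) (by simpa using hmin)
      hline.continuousAt
  have := hmin_line.deriv_deriv_nonneg (hu.continuous.comp hline).continuousAt
  simpa [iteratedFDeriv_two_apply, hu.deriv_deriv_comp_add_smul] using this

theorem lap_nonneg_of_isLocalMin {n : ℕ} {u : EuclideanSpace ℝ (Fin n) → ℝ}
    {x : EuclideanSpace ℝ (Fin n)} (hu : ContDiff ℝ 2 u) (hmin : IsLocalMin u x) :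
    0 ≤ lap n u x :=
  Finset.sum_nonneg fun _ _ => hmin.iteratedFDeriv_two_nonneg hu _

theorem ContDiff.exists_norm_sub_sub_fderiv_le_sq [FiniteDimensional ℝ E] {u : E → F}
    (hu : ContDiff ℝ 2 u) (x : E) :
    ∃ K : NNReal, ∀ z : E, ‖z‖ ≤ 1 → ‖u (x + z) - u x - fderiv ℝ u x z‖ ≤ K * ‖z‖ ^ 2 := by
  obtain ⟨K, hK⟩ := ((hu.fderiv_right (m := 1) le_rfl).contDiffOn (s := closedBall x 1))
    |>.exists_lipschitzOnWith one_ne_zero (convex_closedBall x 1) (isCompact_closedBall x 1)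
  refine ⟨K, fun z hz => ?_⟩
  have bound : ∀ y ∈ closedBall x ‖z‖, ‖fderiv ℝ u y - fderiv ℝ u x‖ ≤ K * ‖z‖ :=
    fun y hy => hK.norm_sub_le_of_le (closedBall_subset_closedBall hz hy)
      (mem_closedBall_self zero_le_one) (by rwa [← dist_eq_norm])
  have := (convex_closedBall x ‖z‖).norm_image_sub_le_of_norm_fderiv_le'
    (fun y _ => hu.differentiable two_ne_zero y) bound (mem_closedBall_self (norm_nonneg z))
    (by simp : x + z ∈ closedBall x ‖z‖)
  simpa [sq, mul_assoc] using this

end Calculus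

theorem norm_div_norm_rpow_le {E : Type*} [NormedAddCommGroup E] {a : ℝ} {z : E} {C β q : ℝ}
    (hC : 0 ≤ C) (ha : |a| ≤ C * ‖z‖ ^ β) : ‖a / ‖z‖ ^ q‖ ≤ C * ‖z‖ ^ (β - q) := by
  rcases eq_or_ne z 0 with rfl | hz
  · rcases eq_or_ne q 0 with rfl | hq
    · simpa using ha
    · simp only [norm_zero, Real.zero_rpow hq, div_zero, norm_zero]
      positivity
  · have hz' : 0 < ‖z‖ := norm_pos_iff.2 hz
    rw [Real.norm_eq_abs, abs_div, abs_of_pos (Real.rpow_pos_of_pos hz' q),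
      Real.rpow_sub hz', ← mul_div_assoc]
    exact div_le_div_of_nonneg_right ha (Real.rpow_nonneg hz'.le q)

section Integrability

open Module

variable {E F : Type*} [NormedAddCommGroup E] [NormedSpace ℝ E] [FiniteDimensional ℝ E]
  [MeasurableSpace E] [BorelSpace E] {μ : Measure E} [μ.IsAddHaarMeasure]
  [NormedAddCommGroup F]

theorem integrableOn_compl_ball_of_norm_le_rpow {f : E → F} {C α : ℝ}
    (hα : finrank ℝ E < α) (h_decay : ∀ x : E, 1 ≤ ‖x‖ → ‖f x‖ ≤ C * ‖x‖ ^ (-α))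
    (h_meas : AEStronglyMeasurable f μ) : IntegrableOn f (ball 0 1)ᶜ μ := by
  have hα0 : 0 < α := lt_of_le_of_lt (Nat.cast_nonneg _) hα
  refine Integrable.mono' ((integrable_one_add_norm hα).const_mul (|C| * 2 ^ α)).integrableOn
    h_meas.restrict ?_
  rw [ae_restrict_iff' measurableSet_ball.compl]
  refine .of_forall fun x hx => ?_
  have hx1 : 1 ≤ ‖x‖ := by simpa using hx
  have hfar : ‖x‖ ^ (-α) ≤ 2 ^ α * (1 + ‖x‖) ^ (-α) := by
    calc ‖x‖ ^ (-α) ≤ ((1 + ‖x‖) / 2) ^ (-α) :=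
          Real.rpow_le_rpow_of_nonpos (by positivity) (by linarith) (by linarith)
      _ = 2 ^ α * (1 + ‖x‖) ^ (-α) := by
          rw [Real.div_rpow (by positivity) zero_le_two, Real.rpow_neg zero_le_two]
          field_simp
  calc ‖f x‖ ≤ C * ‖x‖ ^ (-α) := h_decay x hx1
    _ ≤ |C| * (2 ^ α * (1 + ‖x‖) ^ (-α)) :=
        mul_le_mul (le_abs_self C) hfar (by positivity) (abs_nonneg C)
    _ = |C| * 2 ^ α * (1 + ‖x‖) ^ (-α) := by ring

theorem integrable_secondDifference_div_norm_rpow (hd : 1 ≤ finrank ℝ E) {u : E → ℝ}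
    (hu : ContDiff ℝ 2 u) {M : ℝ} (hM : ∀ y, |u y| ≤ M) (x : E) {q : ℝ}
    (hq : finrank ℝ E < q) (hq' : q < finrank ℝ E + 2) :
    Integrable (fun z => (2 * u x - u (x + z) - u (x - z)) / ‖z‖ ^ q) μ := by
  obtain ⟨K, hK⟩ := hu.exists_norm_sub_sub_fderiv_le_sq x
  have hM0 : 0 ≤ M := (abs_nonneg _).trans (hM x)
  have h_meas : AEStronglyMeasurable
      (fun z => (2 * u x - u (x + z) - u (x - z)) / ‖z‖ ^ q) μ := by
    have hu_cont := hu.continuous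
    exact ((by fun_prop : Continuous fun z => 2 * u x - u (x + z) - u (x - z)).measurable.div
      (measurable_norm.pow_const q)).aestronglyMeasurable
  have h_near : ∀ z : E, ‖z‖ ≤ 1 →
      |2 * u x - u (x + z) - u (x - z)| ≤ 2 * K * ‖z‖ ^ (2 : ℝ) := by
    intro z hz
    have hplus := hK z hz
    have hminus := hK (-z) (by rwa [norm_neg])
    rw [Real.norm_eq_abs] at hplus hminus
    rw [norm_neg, ← sub_eq_add_neg, map_neg] at hminus
    rw [Real.rpow_two]
    calc |2 * u x - u (x + z) - u (x - z)|
        = |(u (x + z) - u x - fderiv ℝ u x z) + (u (x - z) - u x - -fderiv ℝ u x z)| := by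
          rw [← abs_neg]; ring_nf
      _ ≤ 2 * K * ‖z‖ ^ 2 := (abs_add_le _ _).trans (by linarith)
  have h_far : ∀ z : E, |2 * u x - u (x + z) - u (x - z)| ≤ 4 * M * ‖z‖ ^ (0 : ℝ) := by
    intro z
    rw [Real.rpow_zero, mul_one]
    have := abs_le.1 (hM (x + z)); have := abs_le.1 (hM (x - z)); have := abs_le.1 (hM x)
    rw [abs_le]; constructor <;> linarith
  rw [← integrableOn_univ, ← union_compl_self (ball (0 : E) 1)]
  refine (integrableOn_ball_of_norm_le_rpow hd (C := 2 * K) (α := q - 2) (by linarith) ?_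
    h_meas).union (integrableOn_compl_ball_of_norm_le_rpow (C := 4 * M) hq (fun z _ => ?_) h_meas)
  · rw [ae_restrict_iff' measurableSet_ball]
    refine .of_forall fun z hz => ?_
    rw [neg_sub]
    exact norm_div_norm_rpow_le (by positivity) (h_near z (mem_ball_zero_iff.1 hz).le)
  · rw [← zero_sub]
    exact norm_div_norm_rpow_le (by positivity) (h_far z)

end Integrability

section FractionalLaplacian

variable {n : ℕ} {s : ℝ}

theorem fracLapConst_pos (hs : s ∈ Ioo (0 : ℝ) 1) : 0 < fracLapConst n s := by
  obtain ⟨hs0, hs1⟩ := hs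
  have hΓ₁ : 0 < Real.Gamma ((n : ℝ) / 2 + s) := Real.Gamma_pos_of_pos (by positivity)
  have hΓ₂ : 0 < Real.Gamma (1 - s) := Real.Gamma_pos_of_pos (by linarith)
  unfold fracLapConst
  positivity

theorem fracLap_neg_of_isMinOn (hn : 1 ≤ n) (hs : s ∈ Ioo (0 : ℝ) 1)
    {u : EuclideanSpace ℝ (Fin n) → ℝ} (hu : ContDiff ℝ 2 u) (hbdd : ∃ M, ∀ x, |u x| ≤ M)
    {x y : EuclideanSpace ℝ (Fin n)} (hmin : IsMinOn u univ x) (hxy : u x < u y) :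
    fracLap n s u x < 0 := by
  obtain ⟨M, hM⟩ := hbdd
  rw [isMinOn_univ_iff] at hmin
  set w := fun z : EuclideanSpace ℝ (Fin n) =>
    (2 * u x - u (x + z) - u (x - z)) / ‖z‖ ^ ((n : ℝ) + 2 * s)
  have hw_nonpos : ∀ z, w z ≤ 0 := fun z =>
    div_nonpos_of_nonpos_of_nonneg (by linarith [hmin (x + z), hmin (x - z)]) (by positivity)
  have hw_int : Integrable w :=
    integrable_secondDifference_div_norm_rpow (by simpa) hu hM x
      (by simp [hs.1]) (by simp; linarith [hs.2])
  have hw_supp : 0 < volume (Function.support fun z => -w z) := by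
    set U := {z | u x < u (x + z)} ∩ {0}ᶜ
    have hU : IsOpen U :=
      (isOpen_lt continuous_const (hu.continuous.comp (continuous_const_add x))).inter
        isOpen_compl_singleton
    have hyU : y - x ∈ U := ⟨by simpa using hxy, sub_ne_zero.2 fun h => hxy.ne' (congrArg u h)⟩
    refine (hU.measure_pos volume ⟨_, hyU⟩).trans_le (measure_mono fun z hz => ?_)
    have hz0 : 0 < ‖z‖ := norm_pos_iff.2 hz.2
    rw [Function.mem_support, neg_ne_zero]
    have hz1 : u x < u (x + z) := hz.1
    exact (div_neg_of_neg_of_pos (by linarith [hmin (x - z)]) (by positivity)).ne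
  have hw_integral : ∫ z, w z < 0 := by
    have := (integral_pos_iff_support_of_nonneg (fun z => neg_nonneg.2 (hw_nonpos z))
      hw_int.neg).2 hw_supp
    rw [integral_neg] at this
    linarith
  exact mul_neg_of_pos_of_neg (half_pos (fracLapConst_pos hs)) hw_integral

end FractionalLaplacian

theorem two_lt_critExp {n : ℕ} (hn : 2 < n) : 2 < critExp n := by
  have hn' : (2 : ℝ) < n := by exact_mod_cast hn
  rw [critExp, lt_div_iff₀ (by linarith)]
  linarith

theorem stmt18_general (n : ℕ) (hn : 4 ≤ n) (s p lam : ℝ) (hs : s ∈ Ioo (0 : ℝ) 1)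
    (hp : 1 ≤ p ∧ p < critExp n - 1)
    (h u : EuclideanSpace ℝ (Fin n) → ℝ)
    (hu_c2 : ContDiff ℝ 2 u) (hu_bdd : ∃ M, ∀ x, |u x| ≤ M) (hu_nonneg : ∀ x, 0 ≤ u x)
    (heq : ∀ x : EuclideanSpace ℝ (Fin n),
      -lap n u x + fracLap n s u x = lam * h x * u x ^ p + u x ^ (critExp n - 1))
    (hu_ne : ∃ x, u x ≠ 0) :
    ∀ x : EuclideanSpace ℝ (Fin n), 0 < u x := by
  intro x
  by_contra! hx
  have hx0 : u x = 0 := le_antisymm hx (hu_nonneg x)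
  have hmin : IsMinOn u univ x := isMinOn_univ_iff.2 fun y => hx0 ▸ hu_nonneg y
  obtain ⟨y, hy⟩ := hu_ne
  have hxy : u x < u y := hx0 ▸ (hu_nonneg y).lt_of_ne' hy
  have hrhs : lam * h x * u x ^ p + u x ^ (critExp n - 1) = 0 := by
    have hcrit := two_lt_critExp (n := n) (by omega)
    rw [hx0, Real.zero_rpow (by linarith [hp.1]), Real.zero_rpow (by linarith)]
    ring
  have hlap := lap_nonneg_of_isLocalMin hu_c2 (hmin.isLocalMin Filter.univ_mem)
  have hfrac := fracLap_neg_of_isMinOn (by omega) hs hu_c2 hu_bdd hmin hxy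
  linarith [heq x]

/-- Strict positivity of nontrivial nonnegative bounded classical solutions of
`-Δu + (-Δ)ˢu = λ h u^p + u^{2*-1}` in `ℝⁿ`. -/
theorem stmt18 (n : ℕ) (hn : 4 ≤ n) (s p lam : ℝ) (hs : s ∈ Ioo (0 : ℝ) 1)
    (hp : 1 ≤ p ∧ p < critExp n - 1) (hlam : 0 < lam)
    (h u : EuclideanSpace ℝ (Fin n) → ℝ)
    (hh_pos : ∀ x, 0 < h x) (hh_bdd : ∃ M, ∀ x, |h x| ≤ M) (hh_cont : Continuous h)
    (hu_c2 : ContDiff ℝ 2 u) (hu_bdd : ∃ M, ∀ x, |u x| ≤ M) (hu_nonneg : ∀ x, 0 ≤ u x)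
    (heq : ∀ x : EuclideanSpace ℝ (Fin n),
      -lap n u x + fracLap n s u x = lam * h x * u x ^ p + u x ^ (critExp n - 1))
    (hu_ne : ∃ x, u x ≠ 0) :
    ∀ x : EuclideanSpace ℝ (Fin n), 0 < u x :=
  stmt18_general n hn s p lam hs hp h u hu_c2 hu_bdd hu_nonneg heq hu_ne
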